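/- Let f_1, f_2 : ℝ³ → ℝ be given by f_1(x,y,z) = (x² + y² + z²)² and f_2(x,y,z) = (x² + y²)² + z⁴. Then there do not exist a real constant c and an invertible real 3×3 matrix R such that f_2(v) = c·f_1(vR) for all v ∈ ℝ³. -/

import Mathlib

/-! On the plane `v = (s, 0, t)` the right-hand side is `c · q(s, t)²` for the binary quadratic
form `q(s, t) = ‖s u + t w‖²`, where `u` and `w` are the rows `0` and `2` of `R`, whereas the
left-hand side is `s⁴ + t⁴`. But `s⁴ + t⁴` is not a multiple of the square of any quadratic
form, as comparing values at five points shows. -/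

theorem pow_four_add_pow_four_ne_mul_sq_quadratic (c a b d : ℝ) :
    ¬ ∀ s t : ℝ, s ^ 4 + t ^ 4 = c * (a * s ^ 2 + b * s * t + d * t ^ 2) ^ 2 := by
  intro h
  have h10 := h 1 0
  have h01 := h 0 1
  have h11 := h 1 1
  have h1m := h 1 (-1)
  have h12 := h 1 2
  norm_num at h10 h01 h11 h1m h12
  have hodd : c * b * (a + d) = 0 := by linear_combination (h1m - h11) / 4
  have hmid : c * b ^ 2 + 2 * c * a * d = 0 := by
    linear_combination h10 + h01 - h11 - 2 * hodd
  have hbd : c * b * d = 0 := by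
    linear_combination (h10 + 16 * h01 - h12 - 4 * hmid - 4 * hodd) / 12
  have hb : c * b ^ 2 = 0 := by linear_combination (c * b * d) * hbd + c * b ^ 2 * h01
  have had : c * a * d = 0 := by linear_combination (hmid - hb) / 2
  have : (1 : ℝ) = 0 := by linear_combination h10 + c * a ^ 2 * h01 + (c * a * d) * had
  exact one_ne_zero this

/-- The polynomials `f₁(x,y,z) = (x²+y²+z²)²` and `f₂(x,y,z) = (x²+y²)² + z⁴`
are not related by `f₂(v) = c·f₁(vR)` for any constant `c` and any
invertible `3 × 3` matrix `R`. -/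
theorem sphere_not_equivalent_to_cone :
    ¬ ∃ (c : ℝ) (R : Matrix (Fin 3) (Fin 3) ℝ), IsUnit R ∧
      ∀ v : Fin 3 → ℝ,
        ((v 0) ^ 2 + (v 1) ^ 2) ^ 2 + (v 2) ^ 4 =
          c * ((∑ i, v i * R i 0) ^ 2 + (∑ i, v i * R i 1) ^ 2 +
               (∑ i, v i * R i 2) ^ 2) ^ 2 := by
  rintro ⟨c, R, -, h⟩
  refine pow_four_add_pow_four_ne_mul_sq_quadratic c (∑ j, R 0 j ^ 2)
    (2 * ∑ j, R 0 j * R 2 j) (∑ j, R 2 j ^ 2) fun s t => ?_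
  have hst := h ![s, 0, t]
  simp only [Fin.sum_univ_three, Matrix.cons_val_zero, Matrix.cons_val_one, Matrix.cons_val_two,
    Matrix.head_cons, Matrix.tail_cons] at hst ⊢
  linear_combination hst
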